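/- arXiv:1705.02789 — 6 statements merged into one kernel-verified Lean document; each statement's English description precedes it below -/
import Mathlib

section
/- Let ρᵢ > 0, βᵢ ∈ ℝ, θᵢ = √(βᵢ² + 4ρᵢ), and Bᵢ(τ) = 2ρᵢ(e^{θᵢτ} − 1)/((θᵢ − βᵢ)(e^{θᵢτ} − 1) + 2θᵢ) for i = 1, 2. If B₁(τ) = B₂(τ) for all τ ≥ 0, then (θ₁, β₁) = (θ₂, β₂), and equivalently (ρ₁, β₁) = (ρ₂, β₂). -/
open Filter Topology

private lemma exp_term_tendsto (k e : ℝ) (he : e < 0) :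
    Tendsto (fun τ : ℝ => k * Real.exp (e * τ)) atTop (nhds 0) := by
  have h1 : Tendsto (fun τ : ℝ => e * τ) atTop atBot := by
    have := Tendsto.const_mul_atTop (by linarith : (0:ℝ) < -e) (tendsto_id (α := ℝ))
    have h2 : Tendsto (fun τ : ℝ => -(-e * τ)) atTop atBot := tendsto_neg_atBot_iff.mpr this
    simpa using h2
  have h2 : Tendsto (fun τ : ℝ => Real.exp (e * τ)) atTop (nhds 0) :=
    Real.tendsto_exp_atBot.comp h1
  simpa using h2.const_mul k

private lemma coeff_zero (a p : ℝ) (h : ℝ → ℝ)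
    (hh : Tendsto (fun τ : ℝ => h τ * Real.exp (-(p * τ))) atTop (nhds 0))
    (heq : ∀ τ : ℝ, 0 ≤ τ → a * Real.exp (p * τ) + h τ = 0) : a = 0 := by
  have h1 : Tendsto (fun τ : ℝ => (a * Real.exp (p * τ) + h τ) * Real.exp (-(p * τ)))
      atTop (nhds (a + 0)) := by
    have hfun : ∀ τ : ℝ, (a * Real.exp (p * τ) + h τ) * Real.exp (-(p * τ))
        = a + h τ * Real.exp (-(p * τ)) := by
      intro τ
      rw [add_mul, mul_assoc, ← Real.exp_add, add_neg_cancel, Real.exp_zero, mul_one]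
    simpa only [hfun] using (tendsto_const_nhds.add hh)
  have h2 : Tendsto (fun τ : ℝ => (a * Real.exp (p * τ) + h τ) * Real.exp (-(p * τ)))
      atTop (nhds 0) := by
    apply Tendsto.congr' _ (tendsto_const_nhds (α := ℝ))
    filter_upwards [eventually_ge_atTop (0 : ℝ)] with τ hτ
    rw [heq τ hτ, zero_mul]
  have := tendsto_nhds_unique h1 h2
  linarith

/-- If two CIR Riccati solutions `B₁`, `B₂` (with parameters `ρᵢ > 0`, `βᵢ`,
`θᵢ = √(βᵢ²+4ρᵢ)`) agree for all `τ ≥ 0`, then `(θ₁, β₁) = (θ₂, β₂)` and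
equivalently `(ρ₁, β₁) = (ρ₂, β₂)`. -/
theorem stmt_6 (β₁ β₂ ρ₁ ρ₂ θ₁ θ₂ : ℝ) (hρ₁ : 0 < ρ₁) (hρ₂ : 0 < ρ₂)
    (hθ₁ : θ₁ = Real.sqrt (β₁ ^ 2 + 4 * ρ₁)) (hθ₂ : θ₂ = Real.sqrt (β₂ ^ 2 + 4 * ρ₂))
    (B₁ B₂ : ℝ → ℝ)
    (hB₁ : ∀ τ : ℝ, B₁ τ =
      2 * ρ₁ * (Real.exp (θ₁ * τ) - 1) / ((θ₁ - β₁) * (Real.exp (θ₁ * τ) - 1) + 2 * θ₁))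
    (hB₂ : ∀ τ : ℝ, B₂ τ =
      2 * ρ₂ * (Real.exp (θ₂ * τ) - 1) / ((θ₂ - β₂) * (Real.exp (θ₂ * τ) - 1) + 2 * θ₂))
    (heq : ∀ τ : ℝ, 0 ≤ τ → B₁ τ = B₂ τ) :
    (θ₁ = θ₂ ∧ β₁ = β₂) ∧ (ρ₁ = ρ₂ ∧ β₁ = β₂) := by
  -- basic facts about θᵢ
  have hsq₁ : θ₁ ^ 2 = β₁ ^ 2 + 4 * ρ₁ := by
    rw [hθ₁]; exact Real.sq_sqrt (by nlinarith [sq_nonneg β₁])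
  have hsq₂ : θ₂ ^ 2 = β₂ ^ 2 + 4 * ρ₂ := by
    rw [hθ₂]; exact Real.sq_sqrt (by nlinarith [sq_nonneg β₂])
  have hθ₁nn : 0 ≤ θ₁ := hθ₁ ▸ Real.sqrt_nonneg _
  have hθ₂nn : 0 ≤ θ₂ := hθ₂ ▸ Real.sqrt_nonneg _
  have h1m : 0 < θ₁ - β₁ := by nlinarith
  have h1p : 0 < θ₁ + β₁ := by nlinarith
  have h2m : 0 < θ₂ - β₂ := by nlinarith
  have h2p : 0 < θ₂ + β₂ := by nlinarith
  have hθ₁pos : 0 < θ₁ := by linarith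
  have hθ₂pos : 0 < θ₂ := by linarith
  -- coefficients
  set ca : ℝ := ρ₁ * (θ₂ - β₂) - ρ₂ * (θ₁ - β₁) with hca
  set cb : ℝ := ρ₁ * (θ₂ + β₂) + ρ₂ * (θ₁ - β₁) with hcb
  set cc : ℝ := -(ρ₁ * (θ₂ - β₂)) - ρ₂ * (θ₁ + β₁) with hcc
  set cd : ℝ := ρ₁ * (θ₂ - β₂) - ρ₂ * (θ₁ - β₁) - 2 * ρ₁ * θ₂ + 2 * ρ₂ * θ₁ with hcd
  have hcbpos : 0 < cb := by rw [hcb]; nlinarith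
  have hccneg : cc < 0 := by rw [hcc]; nlinarith
  -- key exponential identity
  have key : ∀ τ : ℝ, 0 ≤ τ →
      ca * Real.exp ((θ₁ + θ₂) * τ) + cb * Real.exp (θ₁ * τ)
        + cc * Real.exp (θ₂ * τ) + cd = 0 := by
    intro τ hτ
    have hE₁ : 1 ≤ Real.exp (θ₁ * τ) := Real.one_le_exp (by positivity)
    have hE₂ : 1 ≤ Real.exp (θ₂ * τ) := Real.one_le_exp (by positivity)
    have hD₁ : (0:ℝ) < (θ₁ - β₁) * (Real.exp (θ₁ * τ) - 1) + 2 * θ₁ := by nlinarith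
    have hD₂ : (0:ℝ) < (θ₂ - β₂) * (Real.exp (θ₂ * τ) - 1) + 2 * θ₂ := by nlinarith
    have hBeq := heq τ hτ
    rw [hB₁ τ, hB₂ τ] at hBeq
    have hcross := (div_eq_div_iff hD₁.ne' hD₂.ne').mp hBeq
    have hPQ : Real.exp ((θ₁ + θ₂) * τ) = Real.exp (θ₁ * τ) * Real.exp (θ₂ * τ) := by
      rw [← Real.exp_add]; ring_nf
    rw [hca, hcb, hcc, hcd, hPQ]
    linear_combination hcross / 2
  -- coefficient of the top exponential vanishes
  have ha : ca = 0 := by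
    apply coeff_zero ca (θ₁ + θ₂)
      (fun τ => cb * Real.exp (θ₁ * τ) + cc * Real.exp (θ₂ * τ) + cd)
    · have hfun : ∀ τ : ℝ,
          (cb * Real.exp (θ₁ * τ) + cc * Real.exp (θ₂ * τ) + cd) * Real.exp (-((θ₁ + θ₂) * τ))
          = cb * Real.exp ((-θ₂) * τ) + cc * Real.exp ((-θ₁) * τ)
            + cd * Real.exp ((-(θ₁ + θ₂)) * τ) := by
        intro τ
        rw [add_mul, add_mul, mul_assoc, mul_assoc, ← Real.exp_add, ← Real.exp_add]
        have e1 : θ₁ * τ + -((θ₁ + θ₂) * τ) = -θ₂ * τ := by ring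
        have e2 : θ₂ * τ + -((θ₁ + θ₂) * τ) = -θ₁ * τ := by ring
        have e3 : -((θ₁ + θ₂) * τ) = -(θ₁ + θ₂) * τ := by ring
        rw [e1, e2, e3]
      simp only [hfun]
      have t1 := exp_term_tendsto cb (-θ₂) (by linarith)
      have t2 := exp_term_tendsto cc (-θ₁) (by linarith)
      have t3 := exp_term_tendsto cd (-(θ₁ + θ₂)) (by linarith)
      simpa using (t1.add t2).add t3
    · intro τ hτ
      have := key τ hτ
      linarith
  -- θ₁ = θ₂
  have hθeq : θ₁ = θ₂ := by
    by_contra hne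
    rcases lt_or_gt_of_ne hne with hlt | hgt
    · -- θ₁ < θ₂ : coefficient cc of exp(θ₂ τ) must vanish, contradiction
      have : cc = 0 := by
        apply coeff_zero cc θ₂ (fun τ => cb * Real.exp (θ₁ * τ) + cd)
        · have hfun : ∀ τ : ℝ,
              (cb * Real.exp (θ₁ * τ) + cd) * Real.exp (-(θ₂ * τ))
              = cb * Real.exp ((θ₁ - θ₂) * τ) + cd * Real.exp ((-θ₂) * τ) := by
            intro τ
            rw [add_mul, mul_assoc, ← Real.exp_add]
            have e1 : θ₁ * τ + -(θ₂ * τ) = (θ₁ - θ₂) * τ := by ring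
            have e2 : -(θ₂ * τ) = -θ₂ * τ := by ring
            rw [e1, e2]
          simp only [hfun]
          have t1 := exp_term_tendsto cb (θ₁ - θ₂) (by linarith)
          have t2 := exp_term_tendsto cd (-θ₂) (by linarith)
          simpa using t1.add t2
        · intro τ hτ
          have := key τ hτ
          rw [ha] at this
          linarith
      linarith
    · -- θ₂ < θ₁ : coefficient cb of exp(θ₁ τ) must vanish, contradiction
      have : cb = 0 := by
        apply coeff_zero cb θ₁ (fun τ => cc * Real.exp (θ₂ * τ) + cd)
        · have hfun : ∀ τ : ℝ,
              (cc * Real.exp (θ₂ * τ) + cd) * Real.exp (-(θ₁ * τ))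
              = cc * Real.exp ((θ₂ - θ₁) * τ) + cd * Real.exp ((-θ₁) * τ) := by
            intro τ
            rw [add_mul, mul_assoc, ← Real.exp_add]
            have e1 : θ₂ * τ + -(θ₁ * τ) = (θ₂ - θ₁) * τ := by ring
            have e2 : -(θ₁ * τ) = -θ₁ * τ := by ring
            rw [e1, e2]
          simp only [hfun]
          have t1 := exp_term_tendsto cc (θ₂ - θ₁) (by linarith)
          have t2 := exp_term_tendsto cd (-θ₁) (by linarith)
          simpa using t1.add t2
        · intro τ hτ
          have := key τ hτ
          rw [ha] at this
          linarith
      linarith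
  -- coefficient cb + cc vanishes
  have hbc : cb + cc = 0 := by
    apply coeff_zero (cb + cc) θ₁ (fun _ => cd)
    · have hfun : ∀ τ : ℝ, cd * Real.exp (-(θ₁ * τ)) = cd * Real.exp ((-θ₁) * τ) := by
        intro τ; rw [neg_mul]
      simp only [hfun]
      exact exp_term_tendsto cd (-θ₁) (by linarith)
    · intro τ hτ
      have := key τ hτ
      rw [ha, ← hθeq] at this
      linarith
  -- from value at τ = 0 : cd = 0
  have hd : cd = 0 := by
    have := key 0 le_rfl
    simp only [mul_zero, Real.exp_zero, mul_one] at this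
    linarith
  -- conclude
  have ha' : ρ₁ * (θ₂ - β₂) - ρ₂ * (θ₁ - β₁) = 0 := by rw [← hca]; exact ha
  have hd' : ρ₁ * (θ₂ - β₂) - ρ₂ * (θ₁ - β₁) - 2 * ρ₁ * θ₂ + 2 * ρ₂ * θ₁ = 0 := by
    rw [← hcd]; exact hd
  rw [hθeq] at ha' hd'
  have h5 : 2 * θ₂ * (ρ₂ - ρ₁) = 0 := by linear_combination hd' - ha'
  have hρeq : ρ₁ = ρ₂ := by
    rcases mul_eq_zero.mp h5 with h | h
    · exact absurd h (by positivity)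
    · linarith
  have h6 : ρ₂ * β₂ = ρ₂ * β₁ := by
    rw [hρeq] at ha'
    linear_combination -ha'
  have hβeq : β₁ = β₂ := (mul_left_cancel₀ hρ₂.ne' h6).symm
  exact ⟨⟨hθeq, hβeq⟩, hρeq, hβeq⟩
end

section
/- Let B₁, …, B_m be defined by Bᵢ(τ) = 2ρᵢ(e^{θᵢτ} − 1)/((θᵢ − βᵢ)(e^{θᵢτ} − 1) + 2θᵢ) with ρᵢ > 0, θᵢ = √(βᵢ² + 4ρᵢ), and assume the pairs (ρᵢ, βᵢ) are pairwise distinct. Then B₁, …, B_m are linearly independent as functions on [0, ∞): if ∑ᵢ ζᵢ Bᵢ(τ) = 0 for all τ ≥ 0 with ζ ∈ ℝ^m, then ζ = 0. -/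
/-!
Writing `rᵢ = (θᵢ + βᵢ)/(θᵢ - βᵢ) > 0`, each `Bᵢ` is `(θᵢ + βᵢ)/2 - θᵢrᵢ/(e^{θᵢτ} + rᵢ)`, and
the map `(ρᵢ, βᵢ) ↦ (θᵢ, rᵢ)` is injective, so it suffices that `1` and the functions
`1/(e^{θτ} + r)` with distinct `(θ, r)` are linearly independent on `[0, ∞)`.
A vanishing combination `A + ∑ Cₖ/(e^{θₖz} + rₖ)` extends holomorphically to the strip
`|Im z| < π/θⱼ`, where `θⱼ` is maximal, and vanishes there by the identity theorem. At the
boundary point `zⱼ = (log rⱼ + iπ)/θⱼ` only the `j`-th denominator vanishes, so `Cⱼ`, which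
equals minus the other terms times that denominator, is `0`; induct on the number of terms.
-/

open Finset Filter Set Topology Complex

lemma exp_add_ofReal_ne_zero_of_abs_im_lt {w : ℂ} (hw : |w.im| < Real.pi) {r : ℝ} (hr : 0 ≤ r) :
    exp w + r ≠ 0 := by
  intro h
  have him : w.im = 0 := by
    have hsin : Real.sin w.im = 0 := by
      simpa [exp_im, (Real.exp_pos _).ne'] using congrArg im h
    exact (Real.sin_eq_zero_iff_of_lt_of_lt (abs_lt.1 hw).1 (abs_lt.1 hw).2).1 hsin
  have hre := congrArg re h
  simp only [exp_re, him, Real.cos_zero, mul_one, add_re, ofReal_re, zero_re] at hre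
  linarith [Real.exp_pos w.re]

lemma AnalyticOnNhd.eqOn_zero_of_eventually_ofReal_eq_zero {f : ℂ → ℂ} {U : Set ℂ}
    (hf : AnalyticOnNhd ℂ f U) (hU : IsPreconnected U) {x₀ : ℝ} (hx₀ : (x₀ : ℂ) ∈ U)
    (hzero : ∀ᶠ x : ℝ in 𝓝 x₀, f x = 0) : EqOn f 0 U := by
  refine hf.eqOn_zero_of_preconnected_of_frequently_eq_zero hU hx₀ ?_
  have hofReal : Tendsto ((↑) : ℝ → ℂ) (𝓝[≠] x₀) (𝓝[≠] (x₀ : ℂ)) :=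
    continuous_ofReal.continuousWithinAt.tendsto_nhdsWithin fun x hx => by simpa using hx
  exact hofReal.frequently (hzero.filter_mono nhdsWithin_le_nhds).frequently

lemma exp_ofReal_mul_add_ne_zero {θ c r : ℝ} (hθ : 0 < θ) (hθc : θ * c ≤ Real.pi) (hr : 0 ≤ r)
    {z : ℂ} (hz : z.im ∈ Ioo (-c) c) : exp (θ * z) + r ≠ 0 := by
  refine exp_add_ofReal_ne_zero_of_abs_im_lt ?_ hr
  rw [im_ofReal_mul, abs_mul, abs_of_pos hθ]
  exact (mul_lt_mul_of_pos_left (abs_lt.2 hz) hθ).trans_le hθc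

lemma exp_ofReal_mul_log_div_add_pi_div_mul_I {θ r : ℝ} (hθ : θ ≠ 0) (hr : 0 < r) :
    exp (θ * (↑(Real.log r / θ) + ↑(Real.pi / θ) * I)) = -r := by
  rw [mul_add, ← mul_assoc, ← ofReal_mul, ← ofReal_mul, mul_div_cancel₀ _ hθ,
    mul_div_cancel₀ _ hθ, exp_add, exp_pi_mul_I, ← ofReal_exp, Real.exp_log hr, mul_neg_one]

lemma eq_zero_of_eqOn_mul_of_mem_closure {X R : Type*} [TopologicalSpace X] [TopologicalSpace R]
    [T1Space R] [MulZeroClass R] [ContinuousMul R] {f g : X → R} {U : Set X} {x₀ : X} {c : R}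
    (hf : ContinuousAt f x₀) (hg : ContinuousAt g x₀) (hg₀ : g x₀ = 0) (hx₀ : x₀ ∈ closure U)
    (h : EqOn (fun x => f x * g x) (fun _ => c) U) : c = 0 := by
  have hfg := (hf.mul hg).continuousWithinAt.mem_closure hx₀ (t := {c}) fun x hx => h hx
  rwa [closure_singleton, mem_singleton_iff, Pi.mul_apply, hg₀, mul_zero, eq_comm] at hfg

section SumDivExpAdd

variable {ι : Type*} {θ r C : ι → ℝ} (A : ℝ)

lemma add_sum_div_exp_add_eqOn_zero {s : Finset ι} {c : ℝ} (hc : 0 < c)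
    (hθ : ∀ k ∈ s, 0 < θ k) (hθc : ∀ k ∈ s, θ k * c ≤ Real.pi) (hr : ∀ k ∈ s, 0 ≤ r k)
    (h : ∀ τ : ℝ, 0 ≤ τ → A + ∑ k ∈ s, C k / (Real.exp (θ k * τ) + r k) = 0) :
    EqOn (fun z : ℂ => A + ∑ k ∈ s, C k / (exp (θ k * z) + r k)) 0 (im ⁻¹' Ioo (-c) c) := by
  refine AnalyticOnNhd.eqOn_zero_of_eventually_ofReal_eq_zero (x₀ := 1) ?_
    ((convex_Ioo _ _).linear_preimage imLm).isPreconnected (by simp [hc]) ?_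
  · refine analyticOnNhd_const.add (analyticOnNhd_fun_sum _ fun k hk => ?_)
    refine analyticOnNhd_const.div ?_
      fun z hz => exp_ofReal_mul_add_ne_zero (hθ k hk) (hθc k hk) (hr k hk) hz
    exact (Differentiable.differentiableOn (by fun_prop)).analyticOnNhd
      (isOpen_Ioo.preimage continuous_im)
  · filter_upwards [Ioi_mem_nhds one_pos] with x hx
    exact_mod_cast h x (le_of_lt hx)

lemma coeff_eq_zero_of_max_of_add_sum_div_exp_add_eq_zero {s : Finset ι} {j : ι} (hj : j ∈ s)
    (hjmax : ∀ k ∈ s, θ k ≤ θ j) (hθ : ∀ k ∈ s, 0 < θ k) (hr : ∀ k ∈ s, 0 < r k)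
    (hinj : InjOn (fun k => (θ k, r k)) s)
    (h : ∀ τ : ℝ, 0 ≤ τ → A + ∑ k ∈ s, C k / (Real.exp (θ k * τ) + r k) = 0) : C j = 0 := by
  classical
  set c := Real.pi / θ j
  have hc : θ j * c = Real.pi := mul_div_cancel₀ _ (hθ j hj).ne'
  have hcpos : 0 < c := div_pos Real.pi_pos (hθ j hj)
  have hθc : ∀ k ∈ s, θ k * c ≤ Real.pi := fun k hk => hc ▸ by gcongr; exact hjmax k hk
  set U : Set ℂ := im ⁻¹' Ioo (-c) c
  have hG := add_sum_div_exp_add_eqOn_zero A hcpos hθ hθc (fun k hk => (hr k hk).le) h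
  set zb : ℂ := ↑(Real.log (r j) / θ j) + c * I
  have hzb : exp (θ j * zb) + r j = 0 := by
    rw [exp_ofReal_mul_log_div_add_pi_div_mul_I (hθ j hj).ne' (hr j hj), neg_add_cancel]
  have hdenb : ∀ k ∈ s, k ≠ j → exp (θ k * zb) + r k ≠ 0 := by
    intro k hk hkj
    rcases (hjmax k hk).lt_or_eq with hlt | heq
    · refine exp_add_ofReal_ne_zero_of_abs_im_lt ?_ (hr k hk).le
      have : zb.im = c := by simp [zb]
      rw [im_ofReal_mul, this, abs_of_pos (mul_pos (hθ k hk) hcpos), ← hc]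
      gcongr
    · intro h0
      rw [heq] at h0
      have hrk : (r k : ℂ) = r j := by linear_combination h0 - hzb
      exact hkj (hinj hk hj (Prod.ext heq (by exact_mod_cast hrk)))
  have hzbU : zb ∈ closure U := by
    rw [closure_preimage_im, closure_Ioo (by linarith)]
    simp [zb, hcpos.le]
  refine ofReal_eq_zero.1 <| eq_zero_of_eqOn_mul_of_mem_closure
    (f := fun z => -(A + ∑ k ∈ s.erase j, C k / (exp (θ k * z) + r k)))
    (g := fun z => exp (θ j * z) + r j) ?_ (by fun_prop) hzb hzbU fun z hz => ?_
  · refine (continuousAt_const.add (tendsto_finsetSum _ fun k hk => ?_)).neg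
    exact continuousAt_const.div (by fun_prop) (hdenb k (mem_of_mem_erase hk) (ne_of_mem_erase hk))
  · have h0 := hG hz
    simp only [← add_sum_erase s _ hj, Pi.zero_apply] at h0
    have hdj := exp_ofReal_mul_add_ne_zero (hθ j hj) hc.le (hr j hj).le hz
    dsimp only
    rw [← div_mul_cancel₀ (C j : ℂ) hdj]
    congr 1
    linear_combination -h0

theorem coeff_eq_zero_of_add_sum_div_exp_add_eq_zero (s : Finset ι) (hθ : ∀ k ∈ s, 0 < θ k)
    (hr : ∀ k ∈ s, 0 < r k) (hinj : InjOn (fun k => (θ k, r k)) s)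
    (h : ∀ τ : ℝ, 0 ≤ τ → A + ∑ k ∈ s, C k / (Real.exp (θ k * τ) + r k) = 0) :
    ∀ i ∈ s, C i = 0 := by
  classical
  induction s using Finset.strongInduction with
  | H s ih =>
  intro i hi
  obtain ⟨j, hj, hjmax⟩ := s.exists_max_image θ ⟨i, hi⟩
  have hCj := coeff_eq_zero_of_max_of_add_sum_div_exp_add_eq_zero A hj hjmax hθ hr hinj h
  rcases eq_or_ne i j with rfl | hij
  · exact hCj
  refine ih _ (erase_ssubset hj) (fun k hk => hθ k (mem_of_mem_erase hk))
    (fun k hk => hr k (mem_of_mem_erase hk)) (hinj.mono (by simp)) (fun τ hτ => ?_) i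
    (mem_erase.2 ⟨hij, hi⟩)
  rw [← h τ hτ, ← add_sum_erase s _ hj, hCj, zero_div, zero_add]

end SumDivExpAdd

lemma riccati_solution_eq_sub_div {β ρ θ e : ℝ} (hθ : θ ^ 2 = β ^ 2 + 4 * ρ) (hβ : |β| < θ)
    (he : 0 ≤ e) :
    2 * ρ * (e - 1) / ((θ - β) * (e - 1) + 2 * θ) =
      (θ + β) / 2 - θ * ((θ + β) / (θ - β)) / (e + (θ + β) / (θ - β)) := by
  obtain ⟨hlt, hgt⟩ := abs_lt.1 hβ
  have hsub : 0 < θ - β := by linarith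
  have hden : e * (θ - β) + (θ + β) ≠ 0 := by nlinarith
  rw [show (θ - β) * (e - 1) + 2 * θ = e * (θ - β) + (θ + β) by ring]
  field_simp
  linear_combination (1 - e) * hθ

lemma prod_eq_of_add_div_sub_eq {θ β β' ρ ρ' : ℝ} (hβ : |β| < θ) (hβ' : |β'| < θ)
    (hρ : θ ^ 2 = β ^ 2 + 4 * ρ) (hρ' : θ ^ 2 = β' ^ 2 + 4 * ρ')
    (h : (θ + β) / (θ - β) = (θ + β') / (θ - β')) : (ρ, β) = (ρ', β') := by
  have hθ : 0 < θ := (abs_nonneg _).trans_lt hβ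
  rw [div_eq_div_iff (by linarith [le_abs_self β]) (by linarith [le_abs_self β'])] at h
  have hββ' : β = β' := by
    have : 2 * θ * (β - β') = 0 := by linear_combination h
    simpa [hθ.ne', sub_eq_zero] using this
  subst hββ'
  rw [Prod.mk.injEq]
  exact ⟨by linarith, rfl⟩

/-- The CIR Riccati solutions `Bᵢ(τ) = 2ρᵢ(e^{θᵢτ}−1)/((θᵢ−βᵢ)(e^{θᵢτ}−1)+2θᵢ)`,
with `ρᵢ > 0`, `θᵢ = √(βᵢ²+4ρᵢ)` and pairwise distinct parameter pairs `(ρᵢ, βᵢ)`,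
are linearly independent as functions on `[0, ∞)`. -/
theorem stmt_7 {m : ℕ} (β ρ θ : Fin m → ℝ) (hρ : ∀ i, 0 < ρ i)
    (hθ : ∀ i, θ i = Real.sqrt ((β i) ^ 2 + 4 * ρ i))
    (B : Fin m → ℝ → ℝ)
    (hB : ∀ i, ∀ τ : ℝ, B i τ =
      2 * ρ i * (Real.exp (θ i * τ) - 1) /
        ((θ i - β i) * (Real.exp (θ i * τ) - 1) + 2 * θ i))
    (hdist : ∀ i j, i ≠ j → (ρ i, β i) ≠ (ρ j, β j))
    (ζ : Fin m → ℝ) (hζ : ∀ τ : ℝ, 0 ≤ τ → ∑ i, ζ i * B i τ = 0) :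
    ζ = 0 := by
  have hθsq : ∀ i, θ i ^ 2 = β i ^ 2 + 4 * ρ i := fun i => by
    rw [hθ i, Real.sq_sqrt (by linarith [hρ i, sq_nonneg (β i)])]
  have hβθ : ∀ i, |β i| < θ i := fun i => by
    rw [hθ i, Real.lt_sqrt (abs_nonneg _), sq_abs]
    linarith [hρ i]
  have hθpos : ∀ i, 0 < θ i := fun i => (abs_nonneg _).trans_lt (hβθ i)
  set r : Fin m → ℝ := fun i => (θ i + β i) / (θ i - β i)
  have hr : ∀ i, 0 < r i := fun i => div_pos (by linarith [neg_abs_le (β i), hβθ i])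
    (by linarith [le_abs_self (β i), hβθ i])
  have hinj : InjOn (fun i => (θ i, r i)) (univ : Finset (Fin m)) := by
    intro i _ j _ hij
    simp only [Prod.mk.injEq, r] at hij
    obtain ⟨hθij, hrij⟩ := hij
    rw [← hθij] at hrij
    by_contra hne
    exact hdist i j hne
      (prod_eq_of_add_div_sub_eq (hβθ i) (hθij ▸ hβθ j) (hθsq i) (hθij ▸ hθsq j) hrij)
  have hC := coeff_eq_zero_of_add_sum_div_exp_add_eq_zero (∑ i, ζ i * ((θ i + β i) / 2))
    (C := fun i => -(ζ i * (θ i * r i))) univ (fun i _ => hθpos i) (fun i _ => hr i) hinj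
    fun τ hτ => by
      rw [← hζ τ hτ, ← sum_add_distrib]
      refine sum_congr rfl fun i _ => ?_
      rw [hB, riccati_solution_eq_sub_div (hθsq i) (hβθ i) (Real.exp_pos _).le]
      ring
  ext i
  simpa [(hθpos i).ne', (hr i).ne'] using hC i (mem_univ i)
end

section
/- Under the parameter constraints β₁₃ + β₂₃ = 2(β₁₁ + β₂₂ − β₃₃) and (β₁₃ − β₂₃)(β₁₁ − β₂₂) = (β₁₁ − β₂₂)² + 4(ρ₁ + ρ₂), setting cᵢ = β_{i3} + β₃₃ − β_{ii} for i = 1, 2, the coefficients γ₀ = 2c₁ρ₁(θ + β₂₂) + 2c₂ρ₂(θ + β₁₁) + 8ρ₁ρ₂ and γ₁ = 4c₁ρ₁β₂₂ + 4c₂ρ₂β₁₁ + 16ρ₁ρ₂ both vanish, where θ = √(β₁₁² + 4ρ₁) = √(β₂₂² + 4ρ₂). -/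
/-- Under the constraints `β₁₃ + β₂₃ = 2(β₁₁ + β₂₂ − β₃₃)` and
`(β₁₃ − β₂₃)(β₁₁ − β₂₂) = (β₁₁ − β₂₂)² + 4(ρ₁ + ρ₂)`, with `cᵢ = β_{i3} + β₃₃ − β_{ii}`
and common exponent `θ = √(β₁₁² + 4ρ₁) = √(β₂₂² + 4ρ₂)`, the coefficients
`γ₀` and `γ₁` both vanish. -/
theorem stmt_9 (β₁₁ β₂₂ β₁₃ β₂₃ β₃₃ ρ₁ ρ₂ θ c₁ c₂ γ₀ γ₁ : ℝ)
    (hρ₁ : 0 < ρ₁) (hρ₂ : 0 < ρ₂)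
    (hsame : β₁₁ ^ 2 + 4 * ρ₁ = β₂₂ ^ 2 + 4 * ρ₂)
    (hθ : θ = Real.sqrt (β₁₁ ^ 2 + 4 * ρ₁))
    (hcon1 : β₁₃ + β₂₃ = 2 * (β₁₁ + β₂₂ - β₃₃))
    (hcon2 : (β₁₃ - β₂₃) * (β₁₁ - β₂₂) = (β₁₁ - β₂₂) ^ 2 + 4 * (ρ₁ + ρ₂))
    (hc₁ : c₁ = β₁₃ + β₃₃ - β₁₁) (hc₂ : c₂ = β₂₃ + β₃₃ - β₂₂)
    (hγ₀ : γ₀ = 2 * c₁ * ρ₁ * (θ + β₂₂) + 2 * c₂ * ρ₂ * (θ + β₁₁) + 8 * ρ₁ * ρ₂)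
    (hγ₁ : γ₁ = 4 * c₁ * ρ₁ * β₂₂ + 4 * c₂ * ρ₂ * β₁₁ + 16 * ρ₁ * ρ₂) :
    γ₀ = 0 ∧ γ₁ = 0 := by
  subst hc₁ hc₂ hγ₀ hγ₁
  have hd : β₁₁ - β₂₂ ≠ 0 := by
    intro h
    rw [h] at hcon2
    nlinarith
  have h1 : ((β₁₃ + β₃₃ - β₁₁) * ρ₁ + (β₂₃ + β₃₃ - β₂₂) * ρ₂) * (β₁₁ - β₂₂) = 0 := by
    linear_combination ((ρ₁ + ρ₂) / 2) * hsame
      + ((ρ₁ + ρ₂) * (β₁₁ - β₂₂) / 2) * hcon1 + ((ρ₁ - ρ₂) / 2) * hcon2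
  have h2 : ((β₁₃ + β₃₃ - β₁₁) * ρ₁ * β₂₂ + (β₂₃ + β₃₃ - β₂₂) * ρ₂ * β₁₁
      + 4 * ρ₁ * ρ₂) * (β₁₁ - β₂₂) = 0 := by
    linear_combination
      (((ρ₁ + ρ₂) * (β₁₁ + β₂₂) - (β₁₁ - β₂₂) * (ρ₁ - ρ₂)) / 4) * hsame
      + (((β₁₁ + β₂₂) * (ρ₁ + ρ₂) * (β₁₁ - β₂₂) - (β₁₁ - β₂₂) ^ 2 * (ρ₁ - ρ₂)) / 4) * hcon1
      + (((β₁₁ + β₂₂) * (ρ₁ - ρ₂) - (ρ₁ + ρ₂) * (β₁₁ - β₂₂)) / 4) * hcon2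
  have e1 : (β₁₃ + β₃₃ - β₁₁) * ρ₁ + (β₂₃ + β₃₃ - β₂₂) * ρ₂ = 0 :=
    by exact (mul_eq_zero.1 h1).resolve_right hd
  have e2 : (β₁₃ + β₃₃ - β₁₁) * ρ₁ * β₂₂ + (β₂₃ + β₃₃ - β₂₂) * ρ₂ * β₁₁ + 4 * ρ₁ * ρ₂ = 0 :=
    by exact (mul_eq_zero.1 h2).resolve_right hd
  constructor
  · linear_combination 2 * θ * e1 + 2 * e2
  · linear_combination 4 * e2
end

section
/- Under the parameter constraints of Theorem 4.1 (β₂₂ < β₁₁ < 0, β₂₃ > 0, ρ₂ > 0, β₁₃ = 8ρ₂/(β₁₁−β₂₂) + β₂₃ − 2β₂₂, β₃₃ = β₁₁ + β₂₂ − (β₁₃+β₂₃)/2, ρ₁ = (β₁₁−β₂₂)(β₁₃−β₂₃−2β₁₁)/8), the solutions B₁, B₂, B₃ of the Riccati system B₁' = −B₁² + β₁₁B₁ + ρ₁, B₂' = −B₂² + β₂₂B₂ + ρ₂, B₃' = −B₃² + β₁₃B₁ + β₂₃B₂ + β₃₃B₃ + ρ₁ + ρ₂, all with initial value 0, satisfy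 B₃(τ) = B₁(τ) + B₂(τ) for all τ ≥ 0. -/
/-!
`B₁` and `B₂` are given explicitly by `Bᵢ(τ) = 2ρᵢ(e^{θτ} - 1) / ((θ - βᵢᵢ)(e^{θτ} - 1) + 2θ)`,
and the parameter constraints make the two discriminants `βᵢᵢ² + 4ρᵢ` equal to a common `θ²`.
With a common `θ`, the constraints are exactly what makes `c₁B₁ + c₂B₂ = 2B₁B₂` hold identically,
where `cᵢ = βᵢ₃ + β₃₃ - βᵢᵢ`; this identity says that `B₁ + B₂` solves the Riccati equation of `B₃`,
and uniqueness for that equation gives `B₃ = B₁ + B₂`.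
-/

open Set Real

theorem eqOn_Ici_of_riccati {a t₀ : ℝ} {r f g : ℝ → ℝ}
    (hf : ∀ t ∈ Ici t₀, HasDerivWithinAt f (-(f t) ^ 2 + a * f t + r t) (Ici t₀) t)
    (hg : ∀ t ∈ Ici t₀, HasDerivWithinAt g (-(g t) ^ 2 + a * g t + r t) (Ici t₀) t)
    (h₀ : f t₀ = g t₀) : EqOn f g (Ici t₀) := by
  intro T hT
  have hfc : ContinuousOn f (Icc t₀ T) := fun t ht =>
    (hf t ht.1).continuousWithinAt.mono Icc_subset_Ici_self
  have hgc : ContinuousOn g (Icc t₀ T) := fun t ht =>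
    (hg t ht.1).continuousWithinAt.mono Icc_subset_Ici_self
  -- the difference solves the linear equation `d' = (a - f - g) d`, whose coefficient is bounded
  obtain ⟨K, hK⟩ := isCompact_Icc.exists_bound_of_continuousOn
    (f := fun t => a - f t - g t) (by fun_prop (disch := assumption))
  have hd : ∀ t ∈ Ico t₀ T, HasDerivWithinAt (fun t => f t - g t)
      ((a - f t - g t) * (f t - g t)) (Ici t) t := fun t ht =>
    (((hf t ht.1).sub (hg t ht.1)).mono (Ici_subset_Ici.mpr ht.1)).congr_deriv (by ring)
  have hzero := eq_zero_of_abs_deriv_le_mul_abs_self_of_eq_zero_right (hfc.sub hgc) hd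
    (sub_eq_zero.mpr h₀) (fun t ht => by
      rw [norm_mul]
      exact mul_le_mul_of_nonneg_right (hK t (Ico_subset_Icc_self ht)) (norm_nonneg _))
  exact sub_eq_zero.mp (hzero T ⟨hT, le_rfl⟩)

noncomputable def riccatiDenom (β θ τ : ℝ) : ℝ :=
  (θ - β) * (exp (θ * τ) - 1) + 2 * θ

noncomputable def riccatiSol (β ρ θ τ : ℝ) : ℝ :=
  2 * ρ * (exp (θ * τ) - 1) / riccatiDenom β θ τ

theorem riccatiSol_zero (β ρ θ : ℝ) : riccatiSol β ρ θ 0 = 0 := by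
  simp [riccatiSol]

theorem riccatiDenom_pos {β θ τ : ℝ} (hθ : 0 < θ) (hβ : β < θ) (hτ : 0 ≤ τ) :
    0 < riccatiDenom β θ τ := by
  have : 1 ≤ exp (θ * τ) := one_le_exp (by positivity)
  unfold riccatiDenom
  nlinarith

theorem hasDerivAt_riccatiSol {β ρ θ τ : ℝ} (hθ : θ ^ 2 = β ^ 2 + 4 * ρ)
    (hD : riccatiDenom β θ τ ≠ 0) :
    HasDerivAt (riccatiSol β ρ θ) (-(riccatiSol β ρ θ τ) ^ 2 + β * riccatiSol β ρ θ τ + ρ) τ := by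
  have he : HasDerivAt (fun t => exp (θ * t) - 1) (θ * exp (θ * τ)) τ := by
    simpa [mul_comm] using ((hasDerivAt_id τ).const_mul θ).exp.sub_const 1
  have hq := (he.const_mul (2 * ρ)).div ((he.const_mul (θ - β)).add_const (2 * θ)) hD
  refine hq.congr_deriv ?_
  unfold riccatiSol
  unfold riccatiDenom at hD ⊢
  field_simp
  linear_combination (-(ρ * (exp (θ * τ) - 1) ^ 2)) * hθ

theorem two_mul_riccatiSol_mul_riccatiSol {β₁ β₂ ρ₁ ρ₂ θ c₁ c₂ τ : ℝ}
    (hD₁ : riccatiDenom β₁ θ τ ≠ 0) (hD₂ : riccatiDenom β₂ θ τ ≠ 0)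
    (hA : c₁ * ρ₁ + c₂ * ρ₂ = 0) (hB : β₂ * (c₁ * ρ₁) + β₁ * (c₂ * ρ₂) = -(4 * ρ₁ * ρ₂)) :
    2 * riccatiSol β₁ ρ₁ θ τ * riccatiSol β₂ ρ₂ θ τ =
      c₁ * riccatiSol β₁ ρ₁ θ τ + c₂ * riccatiSol β₂ ρ₂ θ τ := by
  unfold riccatiSol
  field_simp
  unfold riccatiDenom
  linear_combination (-(exp (θ * τ) - 1) * (θ * (exp (θ * τ) - 1) + 2 * θ)) * hA
    + (exp (θ * τ) - 1) ^ 2 * hB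

theorem eqOn_riccatiSol {β ρ θ : ℝ} {B : ℝ → ℝ} (hθ : 0 < θ) (hβ : β < θ)
    (hθ2 : θ ^ 2 = β ^ 2 + 4 * ρ) (hB₀ : B 0 = 0)
    (hB : ∀ τ ∈ Ici (0 : ℝ), HasDerivWithinAt B (-(B τ) ^ 2 + β * B τ + ρ) (Ici 0) τ) :
    EqOn B (riccatiSol β ρ θ) (Ici 0) :=
  eqOn_Ici_of_riccati (r := fun _ => ρ) hB
    (fun _ hτ => (hasDerivAt_riccatiSol hθ2 (riccatiDenom_pos hθ hβ hτ).ne').hasDerivWithinAt)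
    (by rw [hB₀, riccatiSol_zero])

theorem theorem41_coeff_relations {β₁₁ β₂₂ β₂₃ ρ₂ β₁₃ β₃₃ ρ₁ : ℝ} (hβ : β₂₂ ≠ β₁₁)
    (h5 : β₁₃ = 8 * ρ₂ / (β₁₁ - β₂₂) + β₂₃ - 2 * β₂₂)
    (h6 : β₃₃ = β₁₁ + β₂₂ - (β₁₃ + β₂₃) / 2)
    (h7 : ρ₁ = (β₁₁ - β₂₂) * (β₁₃ - β₂₃ - 2 * β₁₁) / 8) :
    β₁₁ ^ 2 + 4 * ρ₁ = β₂₂ ^ 2 + 4 * ρ₂ ∧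
    (β₁₃ + β₃₃ - β₁₁) * ρ₁ + (β₂₃ + β₃₃ - β₂₂) * ρ₂ = 0 ∧
    β₂₂ * ((β₁₃ + β₃₃ - β₁₁) * ρ₁) + β₁₁ * ((β₂₃ + β₃₃ - β₂₂) * ρ₂) = -(4 * ρ₁ * ρ₂) := by
  have hΔ : β₁₁ - β₂₂ ≠ 0 := sub_ne_zero.mpr hβ.symm
  subst h7 h6 h5
  refine ⟨?_, ?_, ?_⟩ <;> field_simp <;> ring

theorem stmt_13_general (β₁₁ β₂₂ β₂₃ ρ₂ β₁₃ β₃₃ ρ₁ : ℝ)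
    (h1 : β₂₂ < β₁₁) (h2 : β₁₁ < 0) (h4 : 0 < ρ₂)
    (h5 : β₁₃ = 8 * ρ₂ / (β₁₁ - β₂₂) + β₂₃ - 2 * β₂₂)
    (h6 : β₃₃ = β₁₁ + β₂₂ - (β₁₃ + β₂₃) / 2)
    (h7 : ρ₁ = (β₁₁ - β₂₂) * (β₁₃ - β₂₃ - 2 * β₁₁) / 8)
    (B₁ B₂ B₃ : ℝ → ℝ)
    (hB₁0 : B₁ 0 = 0) (hB₂0 : B₂ 0 = 0) (hB₃0 : B₃ 0 = 0)
    (hB₁ : ∀ τ ∈ Set.Ici (0 : ℝ),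
      HasDerivWithinAt B₁ (-(B₁ τ) ^ 2 + β₁₁ * B₁ τ + ρ₁) (Set.Ici 0) τ)
    (hB₂ : ∀ τ ∈ Set.Ici (0 : ℝ),
      HasDerivWithinAt B₂ (-(B₂ τ) ^ 2 + β₂₂ * B₂ τ + ρ₂) (Set.Ici 0) τ)
    (hB₃ : ∀ τ ∈ Set.Ici (0 : ℝ),
      HasDerivWithinAt B₃
        (-(B₃ τ) ^ 2 + β₁₃ * B₁ τ + β₂₃ * B₂ τ + β₃₃ * B₃ τ + ρ₁ + ρ₂)
        (Set.Ici 0) τ) :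
    ∀ τ : ℝ, 0 ≤ τ → B₃ τ = B₁ τ + B₂ τ := by
  obtain ⟨hdisc, hA, hB⟩ := theorem41_coeff_relations h1.ne h5 h6 h7
  set θ := √(β₂₂ ^ 2 + 4 * ρ₂)
  have hθ2 : θ ^ 2 = β₂₂ ^ 2 + 4 * ρ₂ := sq_sqrt (by positivity)
  have hθ : 0 < θ := sqrt_pos.mpr (by positivity)
  have hβ₁ : β₁₁ < θ := h2.trans hθ
  have hβ₂ : β₂₂ < θ := h1.trans hβ₁
  have hB₁eq := eqOn_riccatiSol hθ hβ₁ (hθ2.trans hdisc.symm) hB₁0 hB₁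
  have hB₂eq := eqOn_riccatiSol hθ hβ₂ hθ2 hB₂0 hB₂
  have hsum : ∀ τ ∈ Ici (0 : ℝ), HasDerivWithinAt (fun t => B₁ t + B₂ t)
      (-(B₁ τ + B₂ τ) ^ 2 + β₃₃ * (B₁ τ + B₂ τ) + (β₁₃ * B₁ τ + β₂₃ * B₂ τ + ρ₁ + ρ₂))
      (Ici 0) τ := fun τ hτ => by
    have hprod := two_mul_riccatiSol_mul_riccatiSol (riccatiDenom_pos hθ hβ₁ hτ).ne'
      (riccatiDenom_pos hθ hβ₂ hτ).ne' hA hB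
    rw [← hB₁eq hτ, ← hB₂eq hτ] at hprod
    exact ((hB₁ τ hτ).add (hB₂ τ hτ)).congr_deriv (by linear_combination hprod)
  have hB₃' : ∀ τ ∈ Ici (0 : ℝ), HasDerivWithinAt B₃
      (-(B₃ τ) ^ 2 + β₃₃ * B₃ τ + (β₁₃ * B₁ τ + β₂₃ * B₂ τ + ρ₁ + ρ₂)) (Ici 0) τ :=
    fun τ hτ => (hB₃ τ hτ).congr_deriv (by ring)
  exact fun τ hτ => eqOn_Ici_of_riccati hB₃' hsum (by simp [hB₁0, hB₂0, hB₃0]) hτ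

/-- Under the parameter constraints of Theorem 4.1, the solutions `B₁, B₂, B₃` of the
Riccati system (with zero initial values) satisfy `B₃ = B₁ + B₂` on `[0, ∞)`. -/
theorem stmt_13 (β₁₁ β₂₂ β₂₃ ρ₂ β₁₃ β₃₃ ρ₁ : ℝ)
    (h1 : β₂₂ < β₁₁) (h2 : β₁₁ < 0) (h3 : 0 < β₂₃) (h4 : 0 < ρ₂)
    (h5 : β₁₃ = 8 * ρ₂ / (β₁₁ - β₂₂) + β₂₃ - 2 * β₂₂)
    (h6 : β₃₃ = β₁₁ + β₂₂ - (β₁₃ + β₂₃) / 2)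
    (h7 : ρ₁ = (β₁₁ - β₂₂) * (β₁₃ - β₂₃ - 2 * β₁₁) / 8)
    (B₁ B₂ B₃ : ℝ → ℝ)
    (hB₁0 : B₁ 0 = 0) (hB₂0 : B₂ 0 = 0) (hB₃0 : B₃ 0 = 0)
    (hB₁ : ∀ τ ∈ Set.Ici (0 : ℝ),
      HasDerivWithinAt B₁ (-(B₁ τ) ^ 2 + β₁₁ * B₁ τ + ρ₁) (Set.Ici 0) τ)
    (hB₂ : ∀ τ ∈ Set.Ici (0 : ℝ),
      HasDerivWithinAt B₂ (-(B₂ τ) ^ 2 + β₂₂ * B₂ τ + ρ₂) (Set.Ici 0) τ)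
    (hB₃ : ∀ τ ∈ Set.Ici (0 : ℝ),
      HasDerivWithinAt B₃
        (-(B₃ τ) ^ 2 + β₁₃ * B₁ τ + β₂₃ * B₂ τ + β₃₃ * B₃ τ + ρ₁ + ρ₂)
        (Set.Ici 0) τ) :
    ∀ τ : ℝ, 0 ≤ τ → B₃ τ = B₁ τ + B₂ τ :=
  stmt_13_general β₁₁ β₂₂ β₂₃ ρ₂ β₁₃ β₃₃ ρ₁ h1 h2 h4 h5 h6 h7 B₁ B₂ B₃ hB₁0 hB₂0 hB₃0 hB₁ hB₂ hB₃
end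

section
/- Let H : ℝ³ → ℝ³ be given by H(v) = −v∘v + β^T v + ρ (componentwise square, σᵢ² = 2), where β is the upper-triangular matrix with rows (β₁₁, 0, β₁₃), (0, β₂₂, β₂₃), (0, 0, β₃₃) and ρ = (ρ₁, ρ₂, ρ₁+ρ₂)^T. Let S be the 2×3 matrix with rows (1,0,1) and (0,1,1), and L = (1,1,−1). Then L·H(S^T v) = 2v₁v₂ + ℓ(v) for an affine function ℓ of v ∈ ℝ², and in particular there exists v ∈ ℝ² with H(S^T v) ∉ S^T ℝ² = ker L. -/
open Matrix

/-- For the three-factor CIR model with upper-triangular drift matrix `β` and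
`ρ = (ρ₁, ρ₂, ρ₁+ρ₂)ᵀ`, with `S = (1,0,1; 0,1,1)` and `L = (1,1,−1)`, the quantity
`L·H(Sᵀv)` equals `2v₁v₂` plus an affine function of `v`; in particular there is a
`v ∈ ℝ²` with `H(Sᵀv) ∉ Sᵀℝ² = ker L`. -/
theorem stmt_14 (β₁₁ β₁₃ β₂₂ β₂₃ β₃₃ ρ₁ ρ₂ : ℝ)
    (β : Matrix (Fin 3) (Fin 3) ℝ)
    (hβ : β = !![β₁₁, 0, β₁₃; 0, β₂₂, β₂₃; 0, 0, β₃₃])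
    (ρ : Fin 3 → ℝ) (hρ : ρ = ![ρ₁, ρ₂, ρ₁ + ρ₂])
    (H : (Fin 3 → ℝ) → (Fin 3 → ℝ))
    (hH : ∀ v i, H v i = -(v i) ^ 2 + β.transpose.mulVec v i + ρ i)
    (S : Matrix (Fin 2) (Fin 3) ℝ) (hS : S = !![1, 0, 1; 0, 1, 1])
    (L : Fin 3 → ℝ) (hL : L = ![1, 1, -1]) :
    (∃ a b c : ℝ, ∀ v : Fin 2 → ℝ,
        ∑ i, L i * H (S.transpose.mulVec v) i = 2 * v 0 * v 1 + a * v 0 + b * v 1 + c) ∧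
      (∃ v : Fin 2 → ℝ, H (S.transpose.mulVec v) ∉ Set.range S.transpose.mulVec) := by
  have key : ∀ v : Fin 2 → ℝ,
      ∑ i, L i * H (S.transpose.mulVec v) i
        = 2 * v 0 * v 1 + (β₁₁ - β₁₃ - β₃₃) * v 0 + (β₂₂ - β₂₃ - β₃₃) * v 1 := by
    intro v
    subst hβ hρ hS hL
    simp only [hH, Fin.sum_univ_three, mulVec, dotProduct, Fin.sum_univ_two,
      Fin.sum_univ_three, transpose_apply, Matrix.cons_val', Matrix.cons_val_zero,
      Matrix.cons_val_one, Matrix.head_cons, Matrix.empty_val',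
      Matrix.cons_val_fin_one, Matrix.head_fin_const, Matrix.cons_val_two,
      Matrix.tail_cons, Matrix.of_apply]
    ring
  have hz : ∀ u : Fin 2 → ℝ, ∑ i, L i * S.transpose.mulVec u i = 0 := by
    intro u
    subst hS hL
    simp [Fin.sum_univ_three, mulVec, dotProduct, Fin.sum_univ_two]
  refine ⟨⟨β₁₁ - β₁₃ - β₃₃, β₂₂ - β₂₃ - β₃₃, 0, fun v => by rw [key v]; ring⟩, ?_⟩
  set a := β₁₁ - β₁₃ - β₃₃ with ha
  set b := β₂₂ - β₂₃ - β₃₃ with hb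
  by_cases h : 2 + (a + b) = 0
  · refine ⟨![-1, -1], ?_⟩
    rintro ⟨u, hu⟩
    have h1 := key ![-1, -1]
    rw [← hu, hz u] at h1
    simp at h1
    linarith
  · refine ⟨![1, 1], ?_⟩
    rintro ⟨u, hu⟩
    have h1 := key ![1, 1]
    rw [← hu, hz u] at h1
    simp at h1
    exact h (by linarith)
end

section
/- Let ρ ∈ ℝ^d \ {0}, and let H(v) = −(1/2)σ²∘v∘v + β^T v + ρ with σᵢ > 0. Suppose B : [0,∞) → ℝ^d solves B' = H(B), B(0) = 0, and suppose span{B(τ) : τ ≥ 0} = span(ρ) (i.e., the term structure kernel has codimension 1 with S^T ℝ = span ρ). Then for every ξ ⊥ ρ, ξ^T H(sρ) = 0 for all s ∈ ℝ. -/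
/-!
Since `B` stays in the line `span ρ`, write `B τ = c(τ) • ρ` with `c` continuous, `c 0 = 0`
and `c` not identically zero. Differentiating `ξ ⬝ᵥ B τ = 0` gives `ξ ⬝ᵥ H (c(τ) • ρ) = 0`.
As `ξ ⊥ ρ`, `s ↦ ξ ⬝ᵥ H (s • ρ)` is a quadratic `a s² + b s` without constant term, and by the
intermediate value theorem it vanishes at two distinct nonzero points `c(τ₀)` and `c(τ₀)/2`,
so it is identically zero.
-/

open Matrix Set

theorem HasDerivWithinAt.const_dotProduct {n : Type*} [Fintype n] {f : ℝ → n → ℝ}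
    {f' : n → ℝ} {s : Set ℝ} {t : ℝ} (hf : HasDerivWithinAt f f' s t) (ξ : n → ℝ) :
    HasDerivWithinAt (fun x ↦ ξ ⬝ᵥ f x) (ξ ⬝ᵥ f') s t :=
  HasDerivWithinAt.fun_sum fun i _ ↦ ((hasDerivWithinAt_pi.mp hf) i).const_mul (ξ i)

theorem HasDerivWithinAt.eq_zero_of_eqOn_zero {F : Type*} [NormedAddCommGroup F]
    [NormedSpace ℝ F] {f : ℝ → F} {f' : F} {s : Set ℝ} {t : ℝ} (hf : HasDerivWithinAt f f' s t)
    (hs : UniqueDiffWithinAt ℝ s t) (ht : t ∈ s) (hf0 : EqOn f 0 s) : f' = 0 :=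
  hs.eq_deriv s hf ((hasDerivWithinAt_const t s 0).congr hf0 (hf0 ht))

theorem eq_smul_of_mem_span_singleton {n : Type*} [Fintype n] {v ρ : n → ℝ}
    (hv : v ∈ Submodule.span ℝ {ρ}) : v = ((v ⬝ᵥ ρ) / (ρ ⬝ᵥ ρ)) • ρ := by
  obtain ⟨a, rfl⟩ := Submodule.mem_span_singleton.mp hv
  rcases eq_or_ne ρ 0 with rfl | hρ
  · simp
  · have hρρ : ρ ⬝ᵥ ρ ≠ 0 := mt dotProduct_self_eq_zero.mp hρ
    rw [smul_dotProduct, smul_eq_mul, mul_div_cancel_right₀ a hρρ]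

theorem eq_zero_of_mul_sq_add_mul_eq_zero {a b s t : ℝ} (hs : s ≠ 0) (ht : t ≠ 0) (hst : s ≠ t)
    (h_s : a * s ^ 2 + b * s = 0) (h_t : a * t ^ 2 + b * t = 0) : a = 0 ∧ b = 0 := by
  have hs' : a * s + b = 0 := by
    refine (mul_eq_zero.mp ?_).resolve_left hs
    linear_combination h_s
  have ht' : a * t + b = 0 := by
    refine (mul_eq_zero.mp ?_).resolve_left ht
    linear_combination h_t
  have ha : a = 0 := by
    refine (mul_eq_zero.mp ?_).resolve_right (sub_ne_zero.mpr hst)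
    linear_combination hs' - ht'
  exact ⟨ha, by simpa [ha] using hs'⟩

theorem eq_zero_of_forall_mul_sq_add_mul_comp_eq_zero {c : ℝ → ℝ} {a b : ℝ}
    (hc : ContinuousOn c (Ici 0)) (hc0 : c 0 = 0) (hne : ∃ τ ∈ Ici 0, c τ ≠ 0)
    (h : ∀ τ ∈ Ici 0, a * c τ ^ 2 + b * c τ = 0) : a = 0 ∧ b = 0 := by
  obtain ⟨τ₀, hτ₀, hcτ₀⟩ := hne
  have hconn : OrdConnected (c '' Ici 0) := (isPreconnected_Ici.image c hc).ordConnected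
  have hhalf : c τ₀ / 2 ∈ c '' Ici 0 :=
    hconn.uIcc_subset (hc0 ▸ mem_image_of_mem c self_mem_Ici) (mem_image_of_mem c hτ₀)
      (by rw [mem_uIcc]; grind)
  obtain ⟨τ₁, hτ₁, hcτ₁⟩ := hhalf
  refine eq_zero_of_mul_sq_add_mul_eq_zero hcτ₀ (div_ne_zero hcτ₀ two_ne_zero)
    (fun heq ↦ hcτ₀ (by linarith)) (h τ₀ hτ₀) ?_
  simpa [hcτ₁] using h τ₁ hτ₁

theorem exists_dotProduct_riccati_smul {d : ℕ} (ρ σ : Fin d → ℝ) (β : Matrix (Fin d) (Fin d) ℝ)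
    (H : (Fin d → ℝ) → (Fin d → ℝ))
    (hH : ∀ v i, H v i = -(1 / 2) * (σ i) ^ 2 * (v i) ^ 2 + β.transpose.mulVec v i + ρ i)
    (ξ v : Fin d → ℝ) : ∃ a b : ℝ, ∀ s : ℝ, ξ ⬝ᵥ H (s • v) = a * s ^ 2 + b * s + ξ ⬝ᵥ ρ := by
  refine ⟨∑ i, ξ i * (-(1 / 2) * σ i ^ 2 * v i ^ 2), ξ ⬝ᵥ βᵀ *ᵥ v, fun s ↦ ?_⟩
  simp only [dotProduct, hH, mulVec_smul, Pi.smul_apply, smul_eq_mul, Finset.sum_mul,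
    ← Finset.sum_add_distrib]
  exact Finset.sum_congr rfl fun i _ ↦ by ring

theorem stmt_16_general {d : ℕ} (ρ : Fin d → ℝ) (hρ : ρ ≠ 0)
    (σ : Fin d → ℝ) (β : Matrix (Fin d) (Fin d) ℝ)
    (H : (Fin d → ℝ) → (Fin d → ℝ))
    (hH : ∀ v i, H v i = -(1 / 2) * (σ i) ^ 2 * (v i) ^ 2 + β.transpose.mulVec v i + ρ i)
    (B : ℝ → (Fin d → ℝ)) (hB0 : B 0 = 0)
    (hB : ∀ τ ∈ Set.Ici (0 : ℝ), HasDerivWithinAt B (H (B τ)) (Set.Ici 0) τ)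
    (hspan : Submodule.span ℝ (B '' Set.Ici 0) = Submodule.span ℝ {ρ}) :
    ∀ ξ : Fin d → ℝ, (∑ i, ξ i * ρ i = 0) → ∀ s : ℝ, ∑ i, ξ i * H (s • ρ) i = 0 := by
  intro ξ (hξ : ξ ⬝ᵥ ρ = 0)
  set c : ℝ → ℝ := fun τ ↦ (B τ ⬝ᵥ ρ) / (ρ ⬝ᵥ ρ)
  have hBc : ∀ τ ∈ Ici 0, B τ = c τ • ρ := fun τ hτ ↦
    eq_smul_of_mem_span_singleton (hspan ▸ Submodule.subset_span ⟨τ, hτ, rfl⟩)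
  obtain ⟨a, b, hq⟩ := exists_dotProduct_riccati_smul ρ σ β H hH ξ ρ
  simp only [hξ, add_zero] at hq
  have hroots : ∀ τ ∈ Ici 0, a * c τ ^ 2 + b * c τ = 0 := by
    intro τ hτ
    rw [← hq, ← hBc τ hτ]
    exact ((hB τ hτ).const_dotProduct ξ).eq_zero_of_eqOn_zero (uniqueDiffOn_Ici 0 τ hτ) hτ
      fun t ht ↦ by simp [hBc t ht, dotProduct_smul, hξ]
  have hc : ContinuousOn c (Ici 0) :=
    ((continuous_id.dotProduct continuous_const).div_const _).comp_continuousOn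
      fun τ hτ ↦ (hB τ hτ).continuousWithinAt
  have hne : ∃ τ ∈ Ici 0, c τ ≠ 0 := by
    by_contra! hc0
    refine hρ ((Submodule.span_singleton_eq_bot).mp (hspan ▸ Submodule.span_eq_bot.mpr ?_))
    rintro _ ⟨τ, hτ, rfl⟩
    simp [hBc τ hτ, hc0 τ hτ]
  obtain ⟨rfl, rfl⟩ := eq_zero_of_forall_mul_sq_add_mul_comp_eq_zero hc (by simp [c, hB0]) hne
    hroots
  intro s
  exact (hq s).trans (by ring)

/-- Key step in Corollary 3.2: if the Riccati solution `B` (with `B(0) = 0`,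
`B' = H(B)` on `[0,∞)`) spans only `span(ρ)`, then for every `ξ ⊥ ρ` the function
`s ↦ ξᵀ H(sρ)` vanishes identically on `ℝ`. -/
theorem stmt_16 {d : ℕ} (ρ : Fin d → ℝ) (hρ : ρ ≠ 0)
    (σ : Fin d → ℝ) (hσ : ∀ i, 0 < σ i) (β : Matrix (Fin d) (Fin d) ℝ)
    (H : (Fin d → ℝ) → (Fin d → ℝ))
    (hH : ∀ v i, H v i = -(1 / 2) * (σ i) ^ 2 * (v i) ^ 2 + β.transpose.mulVec v i + ρ i)
    (B : ℝ → (Fin d → ℝ)) (hB0 : B 0 = 0)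
    (hB : ∀ τ ∈ Set.Ici (0 : ℝ), HasDerivWithinAt B (H (B τ)) (Set.Ici 0) τ)
    (hspan : Submodule.span ℝ (B '' Set.Ici 0) = Submodule.span ℝ {ρ}) :
    ∀ ξ : Fin d → ℝ, (∑ i, ξ i * ρ i = 0) → ∀ s : ℝ, ∑ i, ξ i * H (s • ρ) i = 0 :=
  stmt_16_general ρ hρ σ β H hH B hB0 hB hspan
end
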